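/- Let p_1,…,p_{N_s} > 0. Suppose for each i = 1,…,N_s the pair (x_i^{SL}, t_i) is an optimal solution of the SB-SLP problem in slot i (maximize t over (x, t) with CI_i(x, t) and ‖x‖² ≤ p_i) with t_i > 0. Set c := √( (∑_{j=1}^{N_s} p_j) / (∑_{j=1}^{N_s} p_j/t_j²) ). Then the tuple ((c/t_1)·x_1^{SL}, …, (c/t_{N_s})·x_{N_s}^{SL}, c) is an optimal solution of the block-level SB slot-variant problem with power budget P = ∑_{j=1}^{N_s} p_j: it is feasible (CI_i((c/t_i)·x_i^{SL}, c) for all i and ∑_i ‖(c/t_i)·x_i^{SL}‖² ≤ P) and every feasible (x_1,…,x_{N_s}, t) satisfies t ≤ c. -/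

import Mathlib

/-!
The CI constraint is positively homogeneous (`CI x u → CI (r • x) (r * u)` for `r ≥ 0`) and the
transmit power scales by `r²`. Hence optimality of `(xᵢ^{SL}, tᵢ)` under budget `pᵢ` says that
reaching margin `u > 0` in slot `i` costs power at least `u² pᵢ / tᵢ²`. Summing over the slots, a
block-level feasible margin satisfies `u² ∑ pᵢ/tᵢ² ≤ ∑ pᵢ`, i.e. `u ≤ c`, and the rescaled slot
optima attain `c` with total power exactly `c² ∑ pᵢ/tᵢ² = ∑ pᵢ`.
-/

open scoped BigOperators

/-- The constructive-interference (CI) constraint in a given symbol slot: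
`CI Nt Nr M h s γ σ x t` holds iff for every user `k`,
`Re((h_kᵀ x)/s_k) − |Im((h_kᵀ x)/s_k)| / tan(π/M) ≥ t·√(γ_k)·σ`. -/
noncomputable def CI (Nt Nr M : ℕ) (h : Fin Nr → Fin Nt → ℂ)
    (s : Fin Nr → ℂ) (γ : Fin Nr → ℝ) (σ : ℝ)
    (x : Fin Nt → ℂ) (t : ℝ) : Prop :=
  ∀ k : Fin Nr,
    ((∑ j, h k j * x j) / s k).re -
        |((∑ j, h k j * x j) / s k).im| / Real.tan (Real.pi / M) ≥
      t * Real.sqrt (γ k) * σ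

theorem CI.smul {Nt Nr M : ℕ} {h : Fin Nr → Fin Nt → ℂ} {s : Fin Nr → ℂ} {γ : Fin Nr → ℝ}
    {σ : ℝ} {x : Fin Nt → ℂ} {u : ℝ} (hCI : CI Nt Nr M h s γ σ x u) {r : ℝ} (hr : 0 ≤ r) :
    CI Nt Nr M h s γ σ (r • x) (r * u) := by
  intro k
  have hsum : ∑ j, h k j * (r • x) j = (r : ℂ) * ∑ j, h k j * x j := by
    rw [Finset.mul_sum]
    refine Finset.sum_congr rfl fun j _ => ?_
    simp only [Pi.smul_apply, Complex.real_smul]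
    ring
  rw [hsum, mul_div_assoc, Complex.re_ofReal_mul, Complex.im_ofReal_mul, abs_mul, abs_of_nonneg hr]
  calc r * u * Real.sqrt (γ k) * σ = r * (u * Real.sqrt (γ k) * σ) := by ring
    _ ≤ r * (((∑ j, h k j * x j) / s k).re -
          |((∑ j, h k j * x j) / s k).im| / Real.tan (Real.pi / M)) :=
        mul_le_mul_of_nonneg_left (hCI k) hr
    _ = _ := by ring

theorem sum_norm_smul_sq {ι E : Type*} [Fintype ι] [SeminormedAddCommGroup E] [NormedSpace ℝ E]
    (r : ℝ) (x : ι → E) : ∑ j, ‖(r • x) j‖ ^ 2 = r ^ 2 * ∑ j, ‖x j‖ ^ 2 := by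
  rw [Finset.mul_sum]
  refine Finset.sum_congr rfl fun j _ => ?_
  rw [Pi.smul_apply, norm_smul, Real.norm_eq_abs, mul_pow, sq_abs]

theorem sq_mul_le_sq_mul_of_forall_mul_le {p q t u : ℝ} (hp : 0 ≤ p) (hq : 0 ≤ q) (hu : 0 < u)
    (h : ∀ r : ℝ, 0 ≤ r → r ^ 2 * q ≤ p → r * u ≤ t) : u ^ 2 * p ≤ t ^ 2 * q := by
  rcases hq.eq_or_lt with rfl | hq
  · have := h ((|t| + 1) / u) (by positivity) (by simpa using hp)
    rw [div_mul_cancel₀ _ hu.ne'] at this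
    linarith [le_abs_self t]
  · set r := Real.sqrt (p / q)
    have hr2 : r ^ 2 = p / q := Real.sq_sqrt (div_nonneg hp hq.le)
    have hru : r * u ≤ t := h r (Real.sqrt_nonneg _) (by rw [hr2, div_mul_cancel₀ _ hq.ne'])
    have hsq := pow_le_pow_left₀ (mul_nonneg (Real.sqrt_nonneg _) hu.le) hru 2
    rw [mul_pow, hr2, div_mul_eq_mul_div, div_le_iff₀ hq] at hsq
    linarith

theorem CI.sq_mul_le_sq_mul_power_of_optimal {Nt Nr M : ℕ} {h : Fin Nr → Fin Nt → ℂ}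
    {s : Fin Nr → ℂ} {γ : Fin Nr → ℝ} {σ p t : ℝ} (hp : 0 ≤ p)
    (hopt : ∀ (x : Fin Nt → ℂ) (u : ℝ), CI Nt Nr M h s γ σ x u → ∑ j, ‖x j‖ ^ 2 ≤ p → u ≤ t)
    {x : Fin Nt → ℂ} {u : ℝ} (hCI : CI Nt Nr M h s γ σ x u) (hu : 0 < u) :
    u ^ 2 * p ≤ t ^ 2 * ∑ j, ‖x j‖ ^ 2 :=
  sq_mul_le_sq_mul_of_forall_mul_le hp (Finset.sum_nonneg fun _ _ => sq_nonneg _) hu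
    fun r hr hpow => hopt _ _ (hCI.smul hr) (by rwa [sum_norm_smul_sq])

theorem stmt7_general (Nt Nr Ns M : ℕ) (hNs : 0 < Ns)
    (h : Fin Nr → Fin Nt → ℂ)
    (s : Fin Nr → Fin Ns → ℂ)
    (γ : Fin Nr → Fin Ns → ℝ)
    (σ : ℝ)
    (p : Fin Ns → ℝ) (hp : ∀ i, 0 < p i)
    (xSL : Fin Ns → Fin Nt → ℂ) (t : Fin Ns → ℝ) (ht : ∀ i, 0 < t i)
    (hfeas : ∀ i, CI Nt Nr M h (fun k => s k i) (fun k => γ k i) σ (xSL i) (t i))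
    (hpow : ∀ i, ∑ j, ‖xSL i j‖ ^ 2 ≤ p i)
    (hopt : ∀ (i : Fin Ns) (x : Fin Nt → ℂ) (u : ℝ),
      CI Nt Nr M h (fun k => s k i) (fun k => γ k i) σ x u →
      (∑ j, ‖x j‖ ^ 2 ≤ p i) → u ≤ t i)
    (c : ℝ) (hc : c = Real.sqrt ((∑ j, p j) / (∑ j, p j / (t j) ^ 2))) :
    (∀ i, CI Nt Nr M h (fun k => s k i) (fun k => γ k i) σ
        ((c / t i) • xSL i) c) ∧
    (∑ i, ∑ j, ‖((c / t i) • xSL i) j‖ ^ 2 ≤ ∑ j, p j) ∧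
    (∀ (x : Fin Ns → Fin Nt → ℂ) (u : ℝ),
      (∀ i, CI Nt Nr M h (fun k => s k i) (fun k => γ k i) σ (x i) u) →
      (∑ i, ∑ j, ‖x i j‖ ^ 2 ≤ ∑ j, p j) → u ≤ c) := by
  have hT : 0 < ∑ j, p j / t j ^ 2 :=
    Finset.sum_pos (fun j _ => div_pos (hp j) (pow_pos (ht j) 2)) ⟨⟨0, hNs⟩, Finset.mem_univ _⟩
  have hS : 0 ≤ ∑ j, p j := Finset.sum_nonneg fun j _ => (hp j).le
  have hc0 : 0 ≤ c := hc ▸ Real.sqrt_nonneg _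
  have hc2 : c ^ 2 = (∑ j, p j) / ∑ j, p j / t j ^ 2 := hc ▸ Real.sq_sqrt (div_nonneg hS hT.le)
  refine ⟨fun i => ?_, ?_, fun x u hCI hpowx => ?_⟩
  · simpa [div_mul_cancel₀ c (ht i).ne'] using (hfeas i).smul (div_nonneg hc0 (ht i).le)
  · calc ∑ i, ∑ j, ‖((c / t i) • xSL i) j‖ ^ 2
        = ∑ i, (c / t i) ^ 2 * ∑ j, ‖xSL i j‖ ^ 2 := by simp only [sum_norm_smul_sq]
      _ ≤ ∑ i, (c / t i) ^ 2 * p i :=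
          Finset.sum_le_sum fun i _ => mul_le_mul_of_nonneg_left (hpow i) (sq_nonneg _)
      _ = c ^ 2 * ∑ i, p i / t i ^ 2 := by
          rw [Finset.mul_sum]; exact Finset.sum_congr rfl fun i _ => by ring
      _ = ∑ j, p j := by rw [hc2, div_mul_cancel₀ _ hT.ne']
  · rcases le_or_gt u 0 with hu | hu
    · exact hu.trans hc0
    have hslot : ∀ i, u ^ 2 * (p i / t i ^ 2) ≤ ∑ j, ‖x i j‖ ^ 2 := fun i => by
      rw [← mul_div_assoc, div_le_iff₀ (pow_pos (ht i) 2), mul_comm _ (t i ^ 2)]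
      exact CI.sq_mul_le_sq_mul_power_of_optimal (hp i).le (hopt i) (hCI i) hu
    have hblock : u ^ 2 * ∑ i, p i / t i ^ 2 ≤ ∑ j, p j := by
      rw [Finset.mul_sum]
      exact (Finset.sum_le_sum fun i _ => hslot i).trans hpowx
    rw [hc, Real.le_sqrt' hu, le_div_iff₀ hT]
    exact hblock

/-- From per-slot SB-SLP optima `(xᵢ^{SL}, tᵢ)` with budgets `pᵢ`, the rescaled tuple
`((c/t₁)·x₁^{SL}, …, (c/t_{N_s})·x_{N_s}^{SL}, c)` with
`c = √((∑pⱼ)/(∑pⱼ/tⱼ²))` is optimal for the block-level SB slot-variant problem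
with budget `P = ∑pⱼ`. -/
theorem stmt7 (Nt Nr Ns M : ℕ) (hNt : 0 < Nt) (hNr : 0 < Nr) (hNs : 0 < Ns)
    (hM : 3 ≤ M)
    (h : Fin Nr → Fin Nt → ℂ)
    (s : Fin Nr → Fin Ns → ℂ) (hs : ∀ k i, s k i ≠ 0)
    (γ : Fin Nr → Fin Ns → ℝ) (hγ : ∀ k i, 0 ≤ γ k i)
    (σ : ℝ) (hσ : 0 < σ)
    (p : Fin Ns → ℝ) (hp : ∀ i, 0 < p i)
    (xSL : Fin Ns → Fin Nt → ℂ) (t : Fin Ns → ℝ) (ht : ∀ i, 0 < t i)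
    (hfeas : ∀ i, CI Nt Nr M h (fun k => s k i) (fun k => γ k i) σ (xSL i) (t i))
    (hpow : ∀ i, ∑ j, ‖xSL i j‖ ^ 2 ≤ p i)
    (hopt : ∀ (i : Fin Ns) (x : Fin Nt → ℂ) (u : ℝ),
      CI Nt Nr M h (fun k => s k i) (fun k => γ k i) σ x u →
      (∑ j, ‖x j‖ ^ 2 ≤ p i) → u ≤ t i)
    (c : ℝ) (hc : c = Real.sqrt ((∑ j, p j) / (∑ j, p j / (t j) ^ 2))) :
    (∀ i, CI Nt Nr M h (fun k => s k i) (fun k => γ k i) σ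
        ((c / t i) • xSL i) c) ∧
    (∑ i, ∑ j, ‖((c / t i) • xSL i) j‖ ^ 2 ≤ ∑ j, p j) ∧
    (∀ (x : Fin Ns → Fin Nt → ℂ) (u : ℝ),
      (∀ i, CI Nt Nr M h (fun k => s k i) (fun k => γ k i) σ (x i) u) →
      (∑ i, ∑ j, ‖x i j‖ ^ 2 ≤ ∑ j, p j) → u ≤ c) :=
  stmt7_general Nt Nr Ns M hNs h s γ σ p hp xSL t ht hfeas hpow hopt c hc
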